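/- There exists an absolute constant C ≥ 1 such that for every Kobayashi hyperbolic complex manifold M, every point p ∈ M, every R ≥ 1, and all x, y ∈ B_M(p,R), one has k_{B_M(p,4R)}(x,y) ≤ C · k_M(x,y); here B_M(p,4R) is regarded as a complex manifold in its own right. -/

import Mathlib

open scoped Manifold Topology
open Set Metric Filter

noncomputable section

/-- The Poincaré (hyperbolic) distance between two points of the unit disc. -/
def poincareDist (a b : ℂ) : ℝ :=
  (1 / 2) * Real.log ((1 + ‖(a - b) / (1 - (starRingEnd ℂ) a * b)‖) /
    (1 - ‖(a - b) / (1 - (starRingEnd ℂ) a * b)‖))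

variable {E : Type*} [NormedAddCommGroup E] [NormedSpace ℂ E]
  {H : Type*} [TopologicalSpace H]
  {M : Type*} [TopologicalSpace M] [ChartedSpace H M]

/-- A holomorphic disc in a subset `Ω` of a complex manifold `M`. -/
def IsHolDiscOn (I : ModelWithCorners ℂ E H) (Ω : Set M) (φ : ℂ → M) : Prop :=
  MDifferentiableOn 𝓘(ℂ) I φ (ball (0 : ℂ) 1) ∧ ∀ ζ ∈ ball (0 : ℂ) 1, φ ζ ∈ Ω

/-- The Kobayashi pseudodistance of the (open) subset `Ω` of the complex manifold `M`,
defined via chains of holomorphic discs. -/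
def kobayashiDistOn (I : ModelWithCorners ℂ E H) (Ω : Set M) (x y : M) : ℝ :=
  sInf {r : ℝ | ∃ (n : ℕ) (φ : ℕ → ℂ → M) (a b : ℕ → ℂ),
    (∀ i ≤ n, IsHolDiscOn I Ω (φ i) ∧ a i ∈ ball (0 : ℂ) 1 ∧ b i ∈ ball (0 : ℂ) 1) ∧
    φ 0 (a 0) = x ∧ φ n (b n) = y ∧
    (∀ i < n, φ i (b i) = φ (i + 1) (a (i + 1))) ∧
    r = ∑ i ∈ Finset.range (n + 1), poincareDist (a i) (b i)}

/-- The Kobayashi pseudodistance of the complex manifold `M`. -/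
def kobayashiDist (I : ModelWithCorners ℂ E H) (x y : M) : ℝ :=
  kobayashiDistOn I Set.univ x y

/-- The Kobayashi--Royden pseudometric of the subset `Ω` of the complex manifold `M`, at the
point `p`, evaluated on the tangent vector represented by `v : E` in the chart `extChartAt I p`. -/
def kobayashiRoydenOn (I : ModelWithCorners ℂ E H) (Ω : Set M) (p : M) (v : E) : ℝ :=
  sInf {α : ℝ | 0 < α ∧ ∃ φ : ℂ → M, IsHolDiscOn I Ω φ ∧ φ 0 = p ∧
    α • deriv (fun ζ => extChartAt I p (φ ζ)) 0 = v}

/-- The Gromov product of `x` and `y` with respect to `o`. -/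
def gromovProd {α : Type*} (d : α → α → ℝ) (o x y : α) : ℝ :=
  (d x o + d y o - d x y) / 2

/-- A "distance function" `d` is Gromov hyperbolic on the set `Ω` if it is `δ`-hyperbolic
for some `δ ≥ 0`. -/
def IsGromovHyperbolicOn {α : Type*} (d : α → α → ℝ) (Ω : Set α) : Prop :=
  ∃ δ : ℝ, 0 ≤ δ ∧ ∀ o ∈ Ω, ∀ x ∈ Ω, ∀ y ∈ Ω, ∀ z ∈ Ω,
    min (gromovProd d o x z) (gromovProd d o y z) - δ ≤ gromovProd d o x y

/-- `d` restricted to `Ω` is a distance, and `(Ω, d)` is Cauchy-complete. -/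
def IsCompleteDistanceOn {α : Type*} (d : α → α → ℝ) (Ω : Set α) : Prop :=
  (∀ x ∈ Ω, ∀ y ∈ Ω, (d x y = 0 ↔ x = y)) ∧
  (∀ x ∈ Ω, ∀ y ∈ Ω, 0 ≤ d x y ∧ d x y = d y x) ∧
  (∀ x ∈ Ω, ∀ y ∈ Ω, ∀ z ∈ Ω, d x z ≤ d x y + d y z) ∧
  (∀ u : ℕ → α, (∀ n, u n ∈ Ω) →
    (∀ ε : ℝ, 0 < ε → ∃ N : ℕ, ∀ m ≥ N, ∀ n ≥ N, d (u m) (u n) < ε) →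
    ∃ x ∈ Ω, ∀ ε : ℝ, 0 < ε → ∃ N : ℕ, ∀ n ≥ N, d (u n) x < ε)

/-- The (open) subset `Ω` of the complex manifold `M` is complete Kobayashi hyperbolic. -/
def IsCompleteKobayashiHyperbolicOn (I : ModelWithCorners ℂ E H) (Ω : Set M) : Prop :=
  IsCompleteDistanceOn (kobayashiDistOn I Ω) Ω

/-- Laplacian of a function `u : ℂ → ℝ` at a point. -/
def laplacianAt (u : ℂ → ℝ) (z : ℂ) : ℝ :=
  fderiv ℝ (fun w => fderiv ℝ u w 1) z 1 +
    fderiv ℝ (fun w => fderiv ℝ u w Complex.I) z Complex.I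

/-- `u` is harmonic on the set `s ⊆ ℂ`. -/
def HarmonicOnSet (u : ℂ → ℝ) (s : Set ℂ) : Prop :=
  ContDiffOn ℝ 2 u s ∧ ∀ z ∈ s, laplacianAt u z = 0

variable {Y : Type*} [TopologicalSpace Y] [ChartedSpace ℂ Y]

/-- A real valued function on a Riemann surface is harmonic if it is harmonic in every
holomorphic chart. -/
def MHarmonic (θ : Y → ℝ) : Prop :=
  ∀ p : Y, HarmonicOnSet (fun z => θ ((extChartAt 𝓘(ℂ) p).symm z)) (extChartAt 𝓘(ℂ) p).target

/-- The differential of `θ : Y → ℝ` read in the chart at `z`; `θ` has a critical point at `z`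
iff this vanishes. -/
def chartDeriv (θ : Y → ℝ) (z : Y) : ℂ →L[ℝ] ℝ :=
  fderiv ℝ (fun w => θ ((extChartAt 𝓘(ℂ) z).symm w)) (extChartAt 𝓘(ℂ) z z)

/-- The Levi form of `ρ : E → ℝ` at `x` in the direction `v`, computed as one quarter of the
Laplacian at `ζ = 0` of `ζ ↦ ρ (x + ζ v)`. -/
def leviForm (ρ : E → ℝ) (x v : E) : ℝ :=
  (1 / 4) * laplacianAt (fun ζ : ℂ => ρ (x + ζ • v)) 0

/-- `v` is a complex tangent vector to the level set of `ρ` at `x`. -/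
def IsComplexTangentAt (ρ : E → ℝ) (x v : E) : Prop :=
  fderiv ℝ ρ x v = 0 ∧ fderiv ℝ ρ x (Complex.I • v) = 0

/-- Analytic manifold, with the meaning of the removed Mathlib class `AnalyticManifold`
(`HasGroupoid M (analyticGroupoid I)`), spelled out: transition maps and their inverses are
`AnalyticOn` (within) on `I.symm ⁻¹' source ∩ range I`. -/
class AnalyticManifold {𝕜 : Type*} [NontriviallyNormedField 𝕜] {E : Type*} [NormedAddCommGroup E]
    [NormedSpace 𝕜 E] {H : Type*} [TopologicalSpace H] (I : ModelWithCorners 𝕜 E H) (M : Type*)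
    [TopologicalSpace M] [ChartedSpace H M] : Prop where
  analytic_transition : ∀ e e' : OpenPartialHomeomorph M H, e ∈ atlas H M → e' ∈ atlas H M →
    AnalyticOn 𝕜 (I ∘ (e.symm ≫ₕ e') ∘ I.symm) (I.symm ⁻¹' (e.symm ≫ₕ e').source ∩ range I) ∧
    AnalyticOn 𝕜 (I ∘ (e.symm ≫ₕ e').symm ∘ I.symm) (I.symm ⁻¹' (e.symm ≫ₕ e').target ∩ range I)


end


/-! ### Auxiliary lemmas -/

section KobAux

open Complex

local notation "conj'" => starRingEnd ℂ

/-- The function `t ↦ artanh t`. -/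
noncomputable def myH (t : ℝ) : ℝ := (1/2) * Real.log ((1+t)/(1-t))

lemma myH_nonneg {t : ℝ} (h0 : 0 ≤ t) (h1 : t < 1) : 0 ≤ myH t := by
  have : (1:ℝ) ≤ (1+t)/(1-t) := by
    rw [le_div_iff₀ (by linarith)]; linarith
  have := Real.log_nonneg this
  unfold myH; linarith

lemma myH_mono {s t : ℝ} (h0 : 0 ≤ s) (hst : s ≤ t) (h1 : t < 1) : myH s ≤ myH t := by
  have h : (1+s)/(1-s) ≤ (1+t)/(1-t) := by
    rw [div_le_div_iff₀ (by linarith) (by linarith)]; nlinarith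
  have := Real.log_le_log (div_pos (by linarith) (by linarith)) h
  unfold myH; linarith

lemma myH_le {t : ℝ} (h0 : 0 ≤ t) (h1 : t < 1) : myH t ≤ t / (1-t) := by
  have h1t : (1:ℝ)-t ≠ 0 := by linarith
  have hx : Real.log ((1+t)/(1-t)) ≤ (1+t)/(1-t) - 1 :=
    Real.log_le_sub_one_of_pos (div_pos (by linarith) (by linarith))
  have e : (1+t)/(1-t) - 1 = 2*(t/(1-t)) := by field_simp [h1t]; ring
  unfold myH
  rw [e] at hx; linarith

lemma myH_ge {t : ℝ} (h0 : 0 ≤ t) (h1 : t < 1) : t / (1+t) ≤ myH t := by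
  have h1t : (1:ℝ)+t ≠ 0 := by linarith
  have hx : Real.log ((1-t)/(1+t)) ≤ (1-t)/(1+t) - 1 :=
    Real.log_le_sub_one_of_pos (div_pos (by linarith) (by linarith))
  have hlog : Real.log ((1-t)/(1+t)) = - Real.log ((1+t)/(1-t)) := by
    rw [Real.log_div (by linarith) (by linarith), Real.log_div (by linarith) (by linarith)]
    ring
  have e : (1-t)/(1+t) - 1 = -(2*(t/(1+t))) := by field_simp [h1t]; ring
  rw [hlog, e] at hx
  unfold myH; linarith

lemma myH_add {A B : ℝ} (hA0 : 0 ≤ A) (hA1 : A < 1) (hB0 : 0 ≤ B) (hB1 : B < 1) :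
    myH A + myH B = myH ((A+B)/(1+A*B)) := by
  have hAB : (0:ℝ) < 1 + A*B := by nlinarith
  have hA : (1:ℝ)-A ≠ 0 := by linarith
  have hB : (1:ℝ)-B ≠ 0 := by linarith
  have hAB' : (1:ℝ)+A*B ≠ 0 := by linarith
  have e1 : 1 + (A+B)/(1+A*B) = (1+A)*(1+B)/(1+A*B) := by field_simp [hAB']; ring
  have e2 : 1 - (A+B)/(1+A*B) = (1-A)*(1-B)/(1+A*B) := by field_simp [hAB']; ring
  unfold myH
  rw [e1, e2]
  have e3 : (1+A)*(1+B)/(1+A*B) / ((1-A)*(1-B)/(1+A*B)) = ((1+A)/(1-A)) * ((1+B)/(1-B)) := by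
    field_simp [hA, hB, hAB']
  rw [e3, Real.log_mul (div_pos (by linarith) (by linarith)).ne'
    (div_pos (by linarith) (by linarith)).ne']
  ring

lemma normSq_key (a b : ℂ) :
    Complex.normSq (1 - conj' a * b) - Complex.normSq (a - b)
      = (1 - Complex.normSq a) * (1 - Complex.normSq b) := by
  simp [Complex.normSq_apply, Complex.sub_re, Complex.sub_im, Complex.mul_re, Complex.mul_im,
    Complex.one_re, Complex.one_im]
  ring

lemma denom_ne (a b : ℂ) (ha : norm a < 1) (hb : norm b < 1) :
    (1 : ℂ) - conj' a * b ≠ 0 := by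
  intro h
  have h1 : norm (conj' a * b) < 1 := by
    rw [norm_mul, Complex.norm_conj]
    nlinarith [norm_nonneg a, norm_nonneg b]
  have h2 : conj' a * b = 1 := by linear_combination -h
  rw [h2] at h1; simp at h1

lemma ratio_lt_one (a b : ℂ) (ha : norm a < 1) (hb : norm b < 1) :
    norm ((a - b) / (1 - conj' a * b)) < 1 := by
  have hd := denom_ne a b ha hb
  have hdpos : 0 < norm (1 - conj' a * b) := by
    simpa [norm_pos_iff] using hd
  rw [norm_div, div_lt_one hdpos]
  have hsq : Complex.normSq (a-b) < Complex.normSq (1 - conj' a * b) := by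
    have h := normSq_key a b
    have ha' : Complex.normSq a < 1 := by
      rw [← Complex.sq_norm]; nlinarith [norm_nonneg a]
    have hb' : Complex.normSq b < 1 := by
      rw [← Complex.sq_norm]; nlinarith [norm_nonneg b]
    nlinarith
  have e1 := Complex.sq_norm (a - b)
  have e2 := Complex.sq_norm (1 - conj' a * b)
  nlinarith [norm_nonneg (a-b)]

lemma poincareDist_eq_myH (a b : ℂ) :
    poincareDist a b = myH (norm ((a - b) / (1 - conj' a * b))) := rfl

lemma poincareDist_nonneg {a b : ℂ} (ha : norm a < 1) (hb : norm b < 1) :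
    0 ≤ poincareDist a b := by
  rw [poincareDist_eq_myH]
  exact myH_nonneg (norm_nonneg _) (ratio_lt_one a b ha hb)

lemma poincareDist_self (a : ℂ) : poincareDist a a = 0 := by
  rw [poincareDist_eq_myH]
  simp [myH]

lemma poincareDist_symm (a b : ℂ) : poincareDist a b = poincareDist b a := by
  rw [poincareDist_eq_myH, poincareDist_eq_myH]
  congr 1
  rw [norm_div, norm_div]
  congr 1
  · exact norm_sub_rev a b
  · rw [← Complex.norm_conj (1 - conj' a * b)]
    congr 1
    simp only [map_sub, map_mul, map_one, Complex.conj_conj]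
    ring

lemma poincareDist_zero_left (z : ℂ) : poincareDist 0 z = myH (norm z) := by
  rw [poincareDist_eq_myH]
  simp

end KobAux


section KobAux2

open Complex

local notation "conj'" => starRingEnd ℂ

/-- Möbius automorphism of the unit disc sending `0` to `a`. -/
noncomputable def mob (a z : ℂ) : ℂ := (z + a) / (1 + conj' a * z)

lemma one_add_ne {w : ℂ} (hw : norm w < 1) : (1 : ℂ) + w ≠ 0 := by
  intro h
  have : w = -1 := by linear_combination h
  rw [this] at hw; simp at hw

lemma conj_mul_abs_lt {a z : ℂ} (ha : norm a < 1) (hz : norm z < 1) :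
    norm (conj' a * z) < 1 := by
  rw [norm_mul, Complex.norm_conj]
  nlinarith [norm_nonneg a, norm_nonneg z]

lemma mob_zero (a : ℂ) : mob a 0 = a := by simp [mob]

lemma mob_normSq_key (a z : ℂ) :
    Complex.normSq (1 + conj' a * z) - Complex.normSq (z + a)
      = (1 - Complex.normSq a) * (1 - Complex.normSq z) := by
  simp [Complex.normSq_apply, Complex.add_re, Complex.add_im, Complex.mul_re, Complex.mul_im,
    Complex.one_re, Complex.one_im]
  ring

lemma mob_mem {a z : ℂ} (ha : norm a < 1) (hz : norm z < 1) :
    norm (mob a z) < 1 := by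
  have hd := one_add_ne (conj_mul_abs_lt ha hz)
  have hdpos : 0 < norm (1 + conj' a * z) := by
    simpa [norm_pos_iff] using hd
  rw [mob, norm_div, div_lt_one hdpos]
  have ha' : Complex.normSq a < 1 := by
    rw [← Complex.sq_norm]; nlinarith [norm_nonneg a]
  have hz' : Complex.normSq z < 1 := by
    rw [← Complex.sq_norm]; nlinarith [norm_nonneg z]
  have h := mob_normSq_key a z
  have e1 := Complex.sq_norm (z + a)
  have e2 := Complex.sq_norm (1 + conj' a * z)
  nlinarith [norm_nonneg (z+a)]

lemma mob_invariance {a x y : ℂ} (ha : norm a < 1) (hx : norm x < 1)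
    (hy : norm y < 1) :
    norm ((mob a x - mob a y) / (1 - conj' (mob a x) * mob a y))
      = norm ((x - y) / (1 - conj' x * y)) := by
  have hd1 : (1 : ℂ) + conj' a * x ≠ 0 := one_add_ne (conj_mul_abs_lt ha hx)
  have hd2 : (1 : ℂ) + conj' a * y ≠ 0 := one_add_ne (conj_mul_abs_lt ha hy)
  have hd3 : (1 : ℂ) + a * conj' x ≠ 0 := by
    intro h
    apply one_add_ne (conj_mul_abs_lt ha hx)
    have h2 := congrArg (conj') h
    simp only [map_add, map_mul, Complex.conj_conj, map_one, map_zero] at h2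
    linear_combination h2
  have hna : (1 : ℂ) - conj' a * a ≠ 0 := by
    have h1 : norm (conj' a * a) < 1 := conj_mul_abs_lt ha ha
    intro h
    have h2 : conj' a * a = 1 := by linear_combination -h
    rw [h2] at h1; simp at h1
  have hxy : (1 : ℂ) - conj' x * y ≠ 0 := by
    have h1 : norm (conj' x * y) < 1 := conj_mul_abs_lt hx hy
    intro h
    have h2 : conj' x * y = 1 := by linear_combination -h
    rw [h2] at h1; simp at h1
  have hcm : conj' (mob a x) = (conj' x + conj' a) / (1 + a * conj' x) := by
    simp [mob, map_div₀, map_add, map_mul, Complex.conj_conj]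
  have I1 : mob a x - mob a y
      = (x - y) * (1 - conj' a * a) / ((1 + conj' a * x) * (1 + conj' a * y)) := by
    rw [mob, mob, div_sub_div _ _ hd1 hd2]; ring
  have I2 : 1 - conj' (mob a x) * mob a y
      = (1 - conj' a * a) * (1 - conj' x * y) / ((1 + a * conj' x) * (1 + conj' a * y)) := by
    rw [hcm, mob, div_mul_div_comm, one_sub_div (mul_ne_zero hd3 hd2)]; ring
  rw [I1, I2]
  have e : (x - y) * (1 - conj' a * a) / ((1 + conj' a * x) * (1 + conj' a * y))
      / ((1 - conj' a * a) * (1 - conj' x * y) / ((1 + a * conj' x) * (1 + conj' a * y)))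
      = ((x - y) / (1 - conj' x * y)) * ((1 + a * conj' x) / (1 + conj' a * x)) := by
    rw [div_div_div_eq, div_mul_div_comm, div_eq_div_iff (mul_ne_zero (mul_ne_zero hd1 hd2) (mul_ne_zero hna hxy)) (mul_ne_zero hxy hd1)]
    ring
  rw [e, norm_mul]
  have habs : norm ((1 + a * conj' x) / (1 + conj' a * x)) = 1 := by
    rw [norm_div]
    have h1 : norm (1 + a * conj' x) = norm (1 + conj' a * x) := by
      rw [← Complex.norm_conj (1 + a * conj' x)]
      congr 1
      simp [map_add, map_mul, Complex.conj_conj]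
    rw [h1, div_self]
    simpa [norm_pos_iff] using one_add_ne (conj_mul_abs_lt ha hx)
  rw [habs, mul_one]

lemma poincareDist_mob {a x y : ℂ} (ha : norm a < 1) (hx : norm x < 1)
    (hy : norm y < 1) :
    poincareDist (mob a x) (mob a y) = poincareDist x y := by
  rw [poincareDist_eq_myH, poincareDist_eq_myH, mob_invariance ha hx hy]

lemma ratio_le (x y : ℂ) (hx : norm x < 1) (hy : norm y < 1) :
    norm ((x - y) / (1 - conj' x * y))
      ≤ (norm x + norm y) / (1 + norm x * norm y) := by
  set A := norm x with hA
  set B := norm y with hB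
  have hA0 : 0 ≤ A := norm_nonneg x
  have hB0 : 0 ≤ B := norm_nonneg y
  have hABpos : (0:ℝ) < 1 + A * B := by nlinarith
  have hd := denom_ne x y hx hy
  have hdpos : 0 < norm (1 - conj' x * y) := by
    simpa [norm_pos_iff] using hd
  rw [norm_div, div_le_div_iff₀ hdpos hABpos]
  set r := (conj' x * y).re with hr
  have e1 : norm (x - y)^2 = A^2 + B^2 - 2*r := by
    rw [hA, hB, Complex.sq_norm, Complex.sq_norm, Complex.sq_norm, hr]
    simp [Complex.normSq_apply, Complex.sub_re, Complex.sub_im, Complex.mul_re, Complex.mul_im,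
      Complex.conj_re, Complex.conj_im]
    ring
  have e2 : norm (1 - conj' x * y)^2 = 1 + A^2*B^2 - 2*r := by
    rw [hA, hB, Complex.sq_norm, Complex.sq_norm, Complex.sq_norm, hr]
    simp [Complex.normSq_apply, Complex.sub_re, Complex.sub_im, Complex.mul_re, Complex.mul_im,
      Complex.conj_re, Complex.conj_im, Complex.one_re, Complex.one_im]
    ring
  have hrAB : 0 ≤ r + A*B := by
    have h1 : |r| ≤ norm (conj' x * y) := Complex.abs_re_le_norm _
    rw [norm_mul, Complex.norm_conj, ← hA, ← hB] at h1
    have := abs_le.mp h1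
    linarith [this.1]
  have hA1 : A < 1 := hx
  have hB1 : B < 1 := hy
  have key : (A+B)^2*(1+A^2*B^2-2*r) - (A^2+B^2-2*r)*(1+A*B)^2
      = 2*(1-A^2)*(1-B^2)*(r+A*B) := by ring
  have hfac : 0 ≤ 2*(1-A^2)*(1-B^2)*(r+A*B) := by
    have f1 : (0:ℝ) ≤ 1-A^2 := by nlinarith
    have f2 : (0:ℝ) ≤ 1-B^2 := by nlinarith
    positivity
  have sq_ineq : (norm (x-y) * (1+A*B))^2
      ≤ ((A+B) * norm (1 - conj' x * y))^2 := by
    have ex1 : (norm (x-y) * (1+A*B))^2 = (A^2+B^2-2*r)*(1+A*B)^2 := by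
      rw [mul_pow, e1]
    have ex2 : ((A+B) * norm (1 - conj' x * y))^2 = (A+B)^2*(1+A^2*B^2-2*r) := by
      rw [mul_pow, e2]
    rw [ex1, ex2]
    linarith [key, hfac]
  have hu : 0 ≤ norm (x-y) * (1+A*B) := by positivity
  have hv : 0 ≤ (A+B) * norm (1 - conj' x * y) := by positivity
  nlinarith [sq_ineq, hu, hv]

/-- Triangle-type bound through the origin. -/
lemma poincareDist_le_myH_add {x y : ℂ} (hx : norm x < 1) (hy : norm y < 1) :
    poincareDist x y ≤ myH (norm x) + myH (norm y) := by
  set A := norm x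
  set B := norm y
  have hA0 : 0 ≤ A := norm_nonneg x
  have hB0 : 0 ≤ B := norm_nonneg y
  have hlt : (A+B)/(1+A*B) < 1 := by
    rw [div_lt_one (by nlinarith)]
    nlinarith
  rw [poincareDist_eq_myH, myH_add hA0 hx hB0 hy]
  exact myH_mono (norm_nonneg _) (ratio_le x y hx hy) hlt

end KobAux2


section KobChains

variable {E : Type*} [NormedAddCommGroup E] [NormedSpace ℂ E]
  {H : Type*} [TopologicalSpace H]
  {M : Type*} [TopologicalSpace M] [ChartedSpace H M]

lemma mem_ball_iff_abs {z : ℂ} : z ∈ ball (0 : ℂ) 1 ↔ norm z < 1 := by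
  rw [mem_ball_zero_iff]

/-- A chain of holomorphic discs in `Ω` from `x` to `y` of total length `r`. -/
def ChainIn (I : ModelWithCorners ℂ E H) (Ω : Set M) (x y : M) (r : ℝ) : Prop :=
  ∃ (n : ℕ) (φ : ℕ → ℂ → M) (a b : ℕ → ℂ),
    (∀ i ≤ n, IsHolDiscOn I Ω (φ i) ∧ a i ∈ ball (0 : ℂ) 1 ∧ b i ∈ ball (0 : ℂ) 1) ∧
    φ 0 (a 0) = x ∧ φ n (b n) = y ∧
    (∀ i < n, φ i (b i) = φ (i + 1) (a (i + 1))) ∧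
    r = ∑ i ∈ Finset.range (n + 1), poincareDist (a i) (b i)

lemma kobayashiDistOn_eq_sInf (I : ModelWithCorners ℂ E H) (Ω : Set M) (x y : M) :
    kobayashiDistOn I Ω x y = sInf {r | ChainIn I Ω x y r} := rfl

lemma ChainIn.nonneg {I : ModelWithCorners ℂ E H} {Ω : Set M} {x y : M} {r : ℝ}
    (h : ChainIn I Ω x y r) : 0 ≤ r := by
  obtain ⟨n, φ, a, b, hd, -, -, -, rfl⟩ := h
  refine Finset.sum_nonneg fun i hi => ?_
  have hi' : i ≤ n := Nat.lt_succ_iff.mp (Finset.mem_range.mp hi)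
  exact poincareDist_nonneg (mem_ball_iff_abs.mp (hd i hi').2.1)
    (mem_ball_iff_abs.mp (hd i hi').2.2)

lemma bddBelow_chains (I : ModelWithCorners ℂ E H) (Ω : Set M) (x y : M) :
    BddBelow {r | ChainIn I Ω x y r} :=
  ⟨0, fun _ hr => hr.nonneg⟩

lemma ChainIn.dist_le {I : ModelWithCorners ℂ E H} {Ω : Set M} {x y : M} {r : ℝ}
    (h : ChainIn I Ω x y r) : kobayashiDistOn I Ω x y ≤ r := by
  rw [kobayashiDistOn_eq_sInf]
  exact csInf_le (bddBelow_chains I Ω x y) h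

lemma kobayashiDistOn_nonneg (I : ModelWithCorners ℂ E H) (Ω : Set M) (x y : M) :
    0 ≤ kobayashiDistOn I Ω x y := by
  rw [kobayashiDistOn_eq_sInf]
  exact Real.sInf_nonneg fun r hr => hr.nonneg

lemma zero_mem_ball : (0 : ℂ) ∈ ball (0 : ℂ) 1 := by
  simp

lemma chain_const {I : ModelWithCorners ℂ E H} {Ω : Set M} {x : M} (hx : x ∈ Ω) :
    ChainIn I Ω x x 0 := by
  refine ⟨0, fun _ _ => x, fun _ => 0, fun _ => 0, ?_, rfl, rfl, ?_, ?_⟩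
  · intro i _
    exact ⟨⟨mdifferentiableOn_const, fun _ _ => hx⟩, zero_mem_ball, zero_mem_ball⟩
  · intro i hi; exact absurd hi (Nat.not_lt_zero i)
  · simp [poincareDist_self]

lemma chain_single {I : ModelWithCorners ℂ E H} {Ω : Set M} {φ : ℂ → M} {a b : ℂ}
    (hφ : IsHolDiscOn I Ω φ) (ha : a ∈ ball (0 : ℂ) 1) (hb : b ∈ ball (0 : ℂ) 1) :
    ChainIn I Ω (φ a) (φ b) (poincareDist a b) := by
  refine ⟨0, fun _ => φ, fun _ => a, fun _ => b, fun i _ => ⟨hφ, ha, hb⟩, rfl, rfl, ?_, by simp⟩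
  intro i hi; exact absurd hi (Nat.not_lt_zero i)

lemma ChainIn.concat {I : ModelWithCorners ℂ E H} {Ω : Set M} {x y z : M} {r s : ℝ}
    (h1 : ChainIn I Ω x y r) (h2 : ChainIn I Ω y z s) : ChainIn I Ω x z (r + s) := by
  obtain ⟨n, φ, a, b, hd, hx0, hyn, hlink, rfl⟩ := h1
  obtain ⟨m, ψ, c, d, hd2, hy0, hzm, hlink2, rfl⟩ := h2
  refine ⟨n + 1 + m, fun i => if i ≤ n then φ i else ψ (i - (n+1)),
    fun i => if i ≤ n then a i else c (i - (n+1)),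
    fun i => if i ≤ n then b i else d (i - (n+1)), ?_, ?_, ?_, ?_, ?_⟩
  · intro i hi
    by_cases h : i ≤ n
    · simp only [h, if_true]; exact hd i h
    · simp only [h, if_false]; exact hd2 (i - (n+1)) (by omega)
  · simp only [Nat.zero_le, if_true]; exact hx0
  · have h : ¬ (n + 1 + m ≤ n) := by omega
    simp only [h, if_false]
    have e : n + 1 + m - (n + 1) = m := by omega
    rw [e]; exact hzm
  · intro i hi
    rcases lt_trichotomy i n with h | h | h
    · have h1' : i ≤ n := le_of_lt h
      have h2' : i + 1 ≤ n := h
      simp only [h1', h2', if_true]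
      exact hlink i h
    · subst h
      have h1' : i ≤ i := le_refl i
      have h2' : ¬ (i + 1 ≤ i) := by omega
      simp only [h1', h2', if_true, if_false]
      have e : i + 1 - (i + 1) = 0 := by omega
      rw [e, hyn, hy0]
    · have h1' : ¬ (i ≤ n) := by omega
      have h2' : ¬ (i + 1 ≤ n) := by omega
      simp only [h1', h2', if_false]
      have e : i + 1 - (n + 1) = (i - (n+1)) + 1 := by omega
      rw [e]
      exact hlink2 (i - (n+1)) (by omega)
  · have key := Finset.sum_range_add (fun i => poincareDist
      (if i ≤ n then a i else c (i - (n+1))) (if i ≤ n then b i else d (i - (n+1)))) (n+1) (m+1)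
    rw [show n+1+m+1 = (n+1)+(m+1) from by omega, key]
    congr 1
    · refine Finset.sum_congr rfl fun i hi => ?_
      have h : i ≤ n := Nat.lt_succ_iff.mp (Finset.mem_range.mp hi)
      simp [h]
    · refine Finset.sum_congr rfl fun i hi => ?_
      have h : ¬ (n + 1 + i ≤ n) := by omega
      have e2 : n + 1 + i - (n + 1) = i := by omega
      simp only [h, if_false, e2]

lemma ChainIn.reverse {I : ModelWithCorners ℂ E H} {Ω : Set M} {x y : M} {r : ℝ}
    (h : ChainIn I Ω x y r) : ChainIn I Ω y x r := by
  obtain ⟨n, φ, a, b, hd, hx0, hyn, hlink, rfl⟩ := h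
  refine ⟨n, fun i => φ (n - i), fun i => b (n - i), fun i => a (n - i), ?_, ?_, ?_, ?_, ?_⟩
  · intro i hi
    obtain ⟨h1, h2, h3⟩ := hd (n - i) (by omega)
    exact ⟨h1, h3, h2⟩
  · simpa using hyn
  · simpa using hx0
  · intro i hi
    have e : n - i = (n - (i+1)) + 1 := by omega
    have := hlink (n - (i+1)) (by omega)
    rw [← e] at this
    exact this.symm
  · rw [show (∑ i ∈ Finset.range (n+1), poincareDist (b (n - i)) (a (n - i)))
        = ∑ i ∈ Finset.range (n+1), poincareDist (a (n - i)) (b (n - i)) from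
      Finset.sum_congr rfl fun i _ => poincareDist_symm _ _]
    have := Finset.sum_range_reflect (fun i => poincareDist (a i) (b i)) (n + 1)
    simp only [Nat.add_sub_cancel] at this
    rw [← this]

end KobChains


section KobChains2

variable {E : Type*} [NormedAddCommGroup E] [NormedSpace ℂ E]
  {H : Type*} [TopologicalSpace H]
  {M : Type*} [TopologicalSpace M] [ChartedSpace H M]
  {I : ModelWithCorners ℂ E H} {Ω : Set M}

lemma chain_prefix {n : ℕ} {φ : ℕ → ℂ → M} {a b : ℕ → ℂ}
    (hd : ∀ i ≤ n, IsHolDiscOn I Ω (φ i) ∧ a i ∈ ball (0 : ℂ) 1 ∧ b i ∈ ball (0 : ℂ) 1)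
    (hlink : ∀ i < n, φ i (b i) = φ (i + 1) (a (i + 1))) :
    ∀ i ≤ n, ChainIn I Ω (φ 0 (a 0)) (φ i (a i))
      (∑ l ∈ Finset.range i, poincareDist (a l) (b l)) := by
  intro i hi
  cases i with
  | zero =>
    simp only [Finset.range_zero, Finset.sum_empty]
    exact chain_const ((hd 0 (Nat.zero_le n)).1.2 (a 0) (hd 0 (Nat.zero_le n)).2.1)
  | succ j =>
    exact ⟨j, φ, a, b, fun l hl => hd l (by omega), rfl, hlink j (by omega),
      fun l hl => hlink l (by omega), rfl⟩

lemma chain_suffix {n : ℕ} {φ : ℕ → ℂ → M} {a b : ℕ → ℂ}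
    (hd : ∀ i ≤ n, IsHolDiscOn I Ω (φ i) ∧ a i ∈ ball (0 : ℂ) 1 ∧ b i ∈ ball (0 : ℂ) 1)
    (hlink : ∀ i < n, φ i (b i) = φ (i + 1) (a (i + 1))) :
    ∀ i ≤ n, ChainIn I Ω (φ i (b i)) (φ n (b n))
      (∑ l ∈ Finset.range (n - i), poincareDist (a (i + 1 + l)) (b (i + 1 + l))) := by
  intro i hi
  rcases eq_or_lt_of_le hi with h | h
  · subst h
    simp only [Nat.sub_self, Finset.range_zero, Finset.sum_empty]
    exact chain_const ((hd i le_rfl).1.2 (b i) (hd i le_rfl).2.2)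
  · refine ⟨n - i - 1, fun l => φ (i + 1 + l), fun l => a (i + 1 + l), fun l => b (i + 1 + l),
      fun l hl => hd (i + 1 + l) (by omega), (hlink i h).symm, ?_, ?_, ?_⟩
    · show φ (i + 1 + (n - i - 1)) (b (i + 1 + (n - i - 1))) = φ n (b n)
      rw [show i + 1 + (n - i - 1) = n from by omega]
    · intro l hl
      exact hlink (i + 1 + l) (by omega)
    · exact Finset.sum_congr (by congr 1; omega) fun l _ => rfl

lemma sum_split (f : ℕ → ℝ) {n i : ℕ} (hi : i ≤ n) :
    ∑ l ∈ Finset.range (n + 1), f l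
      = (∑ l ∈ Finset.range i, f l) + f i + ∑ l ∈ Finset.range (n - i), f (i + 1 + l) := by
  rw [show n + 1 = (i + 1) + (n - i) from by omega, Finset.sum_range_add, Finset.sum_range_succ]

lemma exists_chain_lt {x y : M}
    (hne : {r : ℝ | ChainIn I (univ : Set M) x y r}.Nonempty) {c : ℝ}
    (hc : kobayashiDist I x y < c) :
    ∃ r, ChainIn I (univ : Set M) x y r ∧ r < c := by
  have h := exists_lt_of_csInf_lt hne (by rw [← kobayashiDistOn_eq_sInf]; exact hc)
  obtain ⟨r, hr, hrc⟩ := h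
  exact ⟨r, hr, hrc⟩

lemma chains_nonempty_of_hyp (hyp : ∀ x y : M, x ≠ y → 0 < kobayashiDist I x y) (x y : M) :
    {r : ℝ | ChainIn I (univ : Set M) x y r}.Nonempty := by
  rcases eq_or_ne x y with rfl | h
  · exact ⟨0, chain_const (mem_univ x)⟩
  · by_contra hne
    rw [Set.not_nonempty_iff_eq_empty] at hne
    have h0 : kobayashiDist I x y = 0 := by
      rw [kobayashiDist, kobayashiDistOn_eq_sInf, hne, Real.sInf_empty]
    exact absurd (hyp x y h) (by rw [h0]; exact lt_irrefl 0)

end KobChains2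


section KobOneDisc

open Complex

local notation "conj'" => starRingEnd ℂ

lemma sigma_step {q : ℝ} (hq : 1 < q) (j : ℕ) :
    ((q^j - 1)/(q^j + 1) + (q - 1)/(q + 1)) / (1 + ((q^j - 1)/(q^j + 1)) * ((q - 1)/(q + 1)))
      = (q^(j+1) - 1)/(q^(j+1) + 1) := by
  have hq0 : (0:ℝ) < q := by linarith
  have hP : (0:ℝ) < q^j := pow_pos hq0 j
  have hP1 : (1:ℝ) ≤ q^j := one_le_pow₀ hq.le
  have h1 : q^j + 1 ≠ 0 := by positivity
  have h2 : q + 1 ≠ 0 := by positivity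
  have h3 : q^(j+1) + 1 ≠ 0 := by positivity
  have hden : (0:ℝ) < 1 + ((q^j - 1)/(q^j + 1)) * ((q - 1)/(q + 1)) := by
    have hnum : 0 ≤ ((q^j - 1)/(q^j + 1)) * ((q - 1)/(q + 1)) := by
      apply mul_nonneg <;> apply div_nonneg <;> linarith
    linarith
  rw [pow_succ]
  rw [div_eq_div_iff (by positivity) (by positivity)]
  field_simp
  ring

lemma poincareDist_rot {u x y : ℂ} (hu : norm u = 1) :
    poincareDist (u*x) (u*y) = poincareDist x y := by
  have hnu : conj' u * u = 1 := by
    rw [mul_comm, Complex.mul_conj]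
    norm_cast
    rw [Complex.normSq_eq_norm_sq, hu]; norm_num
  rw [poincareDist_eq_myH, poincareDist_eq_myH]
  congr 1
  have e : (u*x - u*y) = u * (x - y) := by ring
  have e2 : 1 - conj' (u*x) * (u*y) = 1 - conj' x * y := by
    rw [map_mul]
    linear_combination (-(conj' x * y)) * hnu
  rw [e, e2, norm_div, norm_div, norm_mul, hu, one_mul]

lemma mob_differentiableAt {a w : ℂ} (h : (1:ℂ) + conj' a * w ≠ 0) :
    DifferentiableAt ℂ (mob a) w := by
  unfold mob
  apply DifferentiableAt.div
  · exact differentiableAt_id.add_const a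
  · exact (differentiableAt_const _).add ((differentiableAt_const _).mul differentiableAt_id)
  · exact h

end KobOneDisc


section KobOneDisc2

open Complex

local notation "conj'" => starRingEnd ℂ

variable {E : Type*} [NormedAddCommGroup E] [NormedSpace ℂ E]
  {H : Type*} [TopologicalSpace H]
  {M : Type*} [TopologicalSpace M] [ChartedSpace H M]
  {I : ModelWithCorners ℂ E H}

set_option maxHeartbeats 1000000 in
lemma one_disc_localized {Ω : Set M} {φ : ℂ → M} (hφ : IsHolDiscOn I (univ : Set M) φ)
    {a b : ℂ} (ha : a ∈ ball (0:ℂ) 1) (hb : b ∈ ball (0:ℂ) 1)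
    (hmem : ∀ w ∈ ball (0:ℂ) 1,
      poincareDist a w + poincareDist b w ≤ poincareDist a b + 2 → φ w ∈ Ω) :
    ∃ s, s ≤ 7 * poincareDist a b ∧ ChainIn I Ω (φ a) (φ b) s := by
  classical
  have ha' : norm a < 1 := mem_ball_iff_abs.mp ha
  have hb' : norm b < 1 := mem_ball_iff_abs.mp hb
  set d : ℂ := (b - a) / (1 - conj' a * b) with hdd
  have habs : norm ((a - b) / (1 - conj' a * b)) = norm d := by
    rw [hdd, norm_div, norm_div, norm_sub_rev]
  have hL : poincareDist a b = myH (norm d) := by rw [poincareDist_eq_myH, habs]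
  set t := norm d with htd
  have htlt : t < 1 := habs ▸ ratio_lt_one a b ha' hb'
  have ht0 : 0 ≤ t := norm_nonneg d
  rcases eq_or_lt_of_le ht0 with h0 | htpos
  · -- degenerate case : a = b
    have hd0 : d = 0 := by
      have := norm_eq_zero.mp h0.symm
      exact this
    have hba : b = a := by
      have hden := denom_ne a b ha' hb'
      have : b - a = 0 := by
        have := (div_eq_zero_iff.mp hd0).resolve_right hden
        exact this
      linear_combination this
    subst hba
    refine ⟨0, by rw [poincareDist_self]; norm_num, ?_⟩
    exact chain_const (hmem b hb (by simp [poincareDist_self]))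
  · -- main case
    set u : ℂ := d / (t : ℂ) with hud
    have htne : ((t:ℝ):ℂ) ≠ 0 := by
      simp only [ne_eq, Complex.ofReal_eq_zero]
      exact ne_of_gt htpos
    have hu1 : norm u = 1 := by
      rw [hud, norm_div, Complex.norm_real, Real.norm_eq_abs, abs_of_pos htpos, ← htd, div_self (ne_of_gt htpos)]
    have hdu : ((t:ℝ):ℂ) * u = d := by
      rw [hud, mul_div_cancel₀ _ htne]
    set L := myH t with hLt
    have hL0 : 0 < L := lt_of_lt_of_le (div_pos htpos (by linarith)) (myH_ge (le_of_lt htpos) htlt)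
    set N : ℕ := ⌊4*L⌋₊ + 1 with hNdef
    have hN4 : 4 * L < N := by
      have := Nat.lt_floor_add_one (4*L)
      push_cast [hNdef]
      push_cast at this
      linarith
    have hNpos : (0:ℝ) < N := by
      have : 0 < N := Nat.succ_pos _
      exact_mod_cast this
    have hLN : 0 < L / N := div_pos hL0 hNpos
    have hLN4 : L / N < 1/4 := by
      rw [div_lt_iff₀ hNpos]
      linarith
    set q := Real.exp (2 * (L / N)) with hq
    have hq1 : 1 < q := by
      rw [hq]
      exact Real.one_lt_exp_iff.mpr (by linarith)
    have hq0 : 0 < q := lt_trans one_pos hq1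
    set σ : ℕ → ℝ := fun j => (q^j - 1)/(q^j + 1) with hσ
    have hPj : ∀ j : ℕ, (1:ℝ) ≤ q^j := fun j => one_le_pow₀ hq1.le
    have hPjpos : ∀ j : ℕ, (0:ℝ) < q^j + 1 := fun j => by have := hPj j; linarith
    have hσ0 : σ 0 = 0 := by simp [hσ]
    have hσnonneg : ∀ j, 0 ≤ σ j := fun j => div_nonneg (by have := hPj j; linarith) (hPjpos j).le
    have hσlt1 : ∀ j, σ j < 1 := fun j => by
      rw [hσ, div_lt_one (hPjpos j)]; linarith [hPj j]
    have hσmono : ∀ j k, j ≤ k → σ j ≤ σ k := by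
      intro j k hjk
      have hp : q^j ≤ q^k := pow_le_pow_right₀ hq1.le hjk
      rw [hσ, div_le_div_iff₀ (hPjpos j) (hPjpos k)]
      nlinarith
    have hmyHσ : ∀ j, myH (σ j) = j * (L/N) := by
      intro j
      have e : (1 + σ j)/(1 - σ j) = q^j := by
        rw [hσ]
        have h1 : q^j + 1 ≠ 0 := (hPjpos j).ne'
        have h2 : (1:ℝ) - (q^j - 1)/(q^j + 1) ≠ 0 := by
          have := hσlt1 j
          rw [hσ] at this
          linarith [this]
        field_simp
        ring
      rw [myH, e, Real.log_pow, hq, Real.log_exp]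
      push_cast
      ring
    have hqN : q^N = (1+t)/(1-t) := by
      rw [hq, ← Real.exp_nat_mul]
      have e : (N:ℝ) * (2 * (L/N)) = 2 * L := by
        field_simp
      rw [e, hLt, myH]
      rw [show (2:ℝ) * ((1/2) * Real.log ((1+t)/(1-t))) = Real.log ((1+t)/(1-t)) from by ring]
      exact Real.exp_log (div_pos (by linarith) (by linarith))
    have hσN : σ N = t := by
      show (q^N - 1)/(q^N + 1) = t
      have h1t : (1:ℝ) - t ≠ 0 := by linarith
      rw [hqN]
      rw [div_eq_iff (by
        have : (0:ℝ) < (1+t)/(1-t) + 1 := by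
          have : (0:ℝ) < (1+t)/(1-t) := div_pos (by linarith) (by linarith)
          linarith
        exact this.ne')]
      field_simp
      ring
    set τ := σ 1 with hτdef
    have hτq : τ = (q - 1)/(q + 1) := by rw [hτdef, hσ]; norm_num
    have hτ0 : 0 ≤ τ := hσnonneg 1
    have hτ1 : τ < 1 := hσlt1 1
    have hmyHτ : myH τ = L / N := by
      have := hmyHσ 1
      rw [← hτdef] at this
      simpa using this
    have hq137 : q < 13/7 := by
      have h1 : q < Real.exp (1/2) := by
        rw [hq]
        exact Real.exp_lt_exp.mpr (by linarith)
      have h2 : Real.exp (1/2) < 13/7 := by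
        nlinarith [Real.exp_pos (1/2), Real.exp_one_lt_d9,
          (Real.exp_add (1/2) (1/2)).symm, Real.exp_pos (1:ℝ)]
      linarith
    have hτ3 : τ < 3/10 := by
      rw [hτq, div_lt_iff₀ (by linarith)]
      linarith
    have hτLN : τ ≤ (13/10) * (L/N) := by
      have h1 : τ/(1+τ) ≤ myH τ := myH_ge hτ0 hτ1
      rw [hmyHτ] at h1
      have h2 : τ ≤ (L/N) * (1+τ) := by
        rw [div_le_iff₀ (by linarith)] at h1
        linarith
      have h3 : (L/N)*(1+τ) ≤ (L/N)*(13/10) := mul_le_mul_of_nonneg_left (by linarith) hLN.le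
      linarith
    clear_value d t u L N q σ τ
    -- the rotated Möbius chart
    set F : ℂ → ℂ := fun z => mob a (u * z) with hF
    have habsu : ∀ z : ℂ, norm (u * z) = norm z := by
      intro z; rw [norm_mul, hu1, one_mul]
    have hFb : ∀ z, norm z < 1 → norm (F z) < 1 := by
      intro z hz
      apply mob_mem ha'
      rw [habsu]; exact hz
    have hFdist : ∀ x y : ℂ, norm x < 1 → norm y < 1 →
        poincareDist (F x) (F y) = poincareDist x y := by
      intro x y hx hy
      have h1 : norm (u*x) < 1 := by rw [habsu]; exact hx
      have h2 : norm (u*y) < 1 := by rw [habsu]; exact hy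
      calc poincareDist (F x) (F y) = poincareDist (u*x) (u*y) := poincareDist_mob ha' h1 h2
        _ = poincareDist x y := poincareDist_rot hu1
    have hF0 : F 0 = a := by
      show mob a (u * 0) = a
      rw [mul_zero, mob_zero]
    have hdlt : norm d < 1 := htd ▸ htlt
    have hmobd : mob a d = b := by
      have hden1 : (1:ℂ) - conj' a * b ≠ 0 := denom_ne a b ha' hb'
      have hden2 : (1:ℂ) + conj' a * d ≠ 0 := one_add_ne (conj_mul_abs_lt ha' hdlt)
      rw [mob]
      rw [div_eq_iff hden2]
      have hd' : d * (1 - conj' a * b) = b - a := by rw [hdd]; exact div_mul_cancel₀ _ hden1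
      linear_combination hd'
    have hFt : F ((t:ℝ):ℂ) = b := by
      show mob a (u * ((t:ℝ):ℂ)) = b
      rw [mul_comm, hdu, hmobd]
    -- real Möbius cast lemma
    have hmobreal : ∀ x y : ℝ, mob ((x:ℝ):ℂ) ((y:ℝ):ℂ) = ((((y + x)/(1 + x*y)) : ℝ) : ℂ) := by
      intro x y
      rw [mob, Complex.conj_ofReal]
      push_cast
      ring_nf
    -- the geodesic sub-disc maps
    set g : ℕ → ℂ → ℂ := fun j ζ => F (mob ((σ j : ℝ):ℂ) (ζ/2)) with hg
    have hσjlt : ∀ j, norm ((σ j : ℝ):ℂ) < 1 := fun j => by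
      rw [Complex.norm_real, Real.norm_eq_abs, _root_.abs_of_nonneg (hσnonneg j)]; exact hσlt1 j
    have hhalf : ∀ ζ : ℂ, norm ζ < 1 → norm (ζ/2) < 1 := by
      intro ζ hζ
      rw [norm_div]
      simp only [Complex.norm_two]
      linarith [norm_nonneg ζ]
    have hgball : ∀ j ζ, norm ζ < 1 → norm (g j ζ) < 1 := fun j ζ hζ =>
      hFb _ (mob_mem (hσjlt j) (hhalf ζ hζ))
    -- step identities
    have hstep : ∀ j : ℕ, (τ + σ j)/(1 + σ j * τ) = σ (j+1) := by
      intro j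
      have h := sigma_step hq1 j
      simp only [hσ, hτq]
      rw [show ((q^j - 1)/(q^j + 1) : ℝ) * ((q - 1)/(q + 1)) = ((q - 1)/(q + 1)) * ((q^j - 1)/(q^j + 1)) from by ring] at h ⊢
      rw [← h]
      ring_nf
    have hstepc : ∀ j : ℕ, mob ((σ j :ℝ):ℂ) ((τ:ℝ):ℂ) = ((σ (j+1) : ℝ):ℂ) := by
      intro j
      rw [hmobreal, hstep j]
    -- membership bounds
    have hd1pos : ∀ j, (0:ℝ) < 1 - σ j * t := by
      intro j
      have h1 : σ j * t ≤ σ j := mul_le_of_le_one_right (hσnonneg j) htlt.le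
      linarith [hσlt1 j]
    have hσjt : ∀ j ≤ N, σ j ≤ t := fun j hj => hσN ▸ hσmono j N hj
    have hτ'0 : ∀ j ≤ N, 0 ≤ (t - σ j)/(1 - σ j * t) := fun j hj =>
      div_nonneg (by linarith [hσjt j hj]) (hd1pos j).le
    have hτ'1 : ∀ j, (t - σ j)/(1 - σ j * t) < 1 := by
      intro j
      rw [div_lt_one (hd1pos j)]
      have h3 : (1-t)*(1+σ j) = 1 - t + σ j - σ j * t := by ring
      have h2 : 0 < (1 - t) * (1 + σ j) := mul_pos (by linarith) (by linarith [hσnonneg j])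
      linarith
    have hcombo : ∀ j ≤ N, ((t - σ j)/(1 - σ j * t) + σ j)/(1 + σ j * ((t - σ j)/(1 - σ j * t))) = t := by
      intro j hj
      have h1 : (1:ℝ) - σ j * t ≠ 0 := (hd1pos j).ne'
      have h2 : (0:ℝ) < 1 + σ j * ((t - σ j)/(1 - σ j * t)) := by
        have := mul_nonneg (hσnonneg j) (hτ'0 j hj)
        linarith
      rw [div_eq_iff h2.ne']
      have hX : (t - σ j)/(1 - σ j * t) * (1 - σ j * t) = t - σ j := div_mul_cancel₀ _ h1
      linear_combination hX
    have hmyH_split : ∀ j, j ≤ N → myH (σ j) + myH ((t - σ j)/(1 - σ j * t)) = L := by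
      intro j hj
      rw [myH_add (hσnonneg j) (hσlt1 j) (hτ'0 j hj) (hτ'1 j)]
      rw [show (σ j + (t - σ j)/(1 - σ j * t))/(1 + σ j * ((t - σ j)/(1 - σ j * t)))
          = ((t - σ j)/(1 - σ j * t) + σ j)/(1 + σ j * ((t - σ j)/(1 - σ j * t))) from by ring_nf]
      rw [hcombo j hj, hLt]
    have hτ'c : ∀ j, j ≤ N → mob ((σ j:ℝ):ℂ) ((((t - σ j)/(1 - σ j * t)):ℝ):ℂ) = ((t:ℝ):ℂ) := by
      intro j hj
      rw [hmobreal, hcombo j hj]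
    have hmyHhalf : myH (1/2) ≤ 1 := by
      have h := myH_le (by norm_num : (0:ℝ) ≤ 1/2) (by norm_num : (1:ℝ)/2 < 1)
      norm_num at h
      linarith
    have hkey : ∀ j, j ≤ N → ∀ ζ : ℂ, norm ζ < 1 →
        poincareDist a (g j ζ) + poincareDist b (g j ζ) ≤ poincareDist a b + 2 := by
      intro j hj ζ hζ
      have hhalflt : norm (ζ/2) < 1 := hhalf ζ hζ
      have hXlt : norm (mob ((σ j:ℝ):ℂ) (ζ/2)) < 1 := mob_mem (hσjlt j) hhalflt
      have h3 : myH (norm (ζ/2)) ≤ 1 := by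
        have habs2 : norm (ζ/2) ≤ 1/2 := by
          rw [norm_div, Complex.norm_two]
          linarith
        exact le_trans (myH_mono (norm_nonneg _) habs2 (by norm_num)) hmyHhalf
      have hminus : norm (-((σ j:ℝ):ℂ)) < 1 := by
        rw [norm_neg]; exact hσjlt j
      have hmob0 : mob ((σ j:ℝ):ℂ) (-((σ j:ℝ):ℂ)) = 0 := by
        rw [mob, neg_add_cancel, zero_div]
      have hpa : poincareDist a (g j ζ) ≤ myH (σ j) + 1 := by
        have e2 : poincareDist (-((σ j:ℝ):ℂ)) (ζ/2) ≤ myH (σ j) + 1 := by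
          have h := poincareDist_le_myH_add hminus hhalflt
          have h2 : myH (norm (-((σ j:ℝ):ℂ))) = myH (σ j) := by
            rw [norm_neg, Complex.norm_real, Real.norm_eq_abs, _root_.abs_of_nonneg (hσnonneg j)]
          rw [h2] at h
          linarith
        calc poincareDist a (g j ζ)
            = poincareDist (F 0) (F (mob ((σ j:ℝ):ℂ) (ζ/2))) := by rw [hF0]
          _ = poincareDist 0 (mob ((σ j:ℝ):ℂ) (ζ/2)) := hFdist _ _ (by simp) hXlt
          _ = poincareDist (mob ((σ j:ℝ):ℂ) (-((σ j:ℝ):ℂ))) (mob ((σ j:ℝ):ℂ) (ζ/2)) := by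
              rw [hmob0]
          _ = poincareDist (-((σ j:ℝ):ℂ)) (ζ/2) := poincareDist_mob (hσjlt j) hminus hhalflt
          _ ≤ myH (σ j) + 1 := e2
      have hτ'lt : norm ((((t - σ j)/(1 - σ j * t)):ℝ):ℂ) < 1 := by
        rw [Complex.norm_real, Real.norm_eq_abs, _root_.abs_of_nonneg (hτ'0 j hj)]; exact hτ'1 j
      have hpb : poincareDist b (g j ζ) ≤ myH ((t - σ j)/(1 - σ j * t)) + 1 := by
        have e2 : poincareDist ((((t - σ j)/(1 - σ j * t)):ℝ):ℂ) (ζ/2)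
            ≤ myH ((t - σ j)/(1 - σ j * t)) + 1 := by
          have h := poincareDist_le_myH_add hτ'lt hhalflt
          rw [Complex.norm_real, Real.norm_eq_abs, _root_.abs_of_nonneg (hτ'0 j hj)] at h
          linarith
        calc poincareDist b (g j ζ)
            = poincareDist (F ((t:ℝ):ℂ)) (F (mob ((σ j:ℝ):ℂ) (ζ/2))) := by rw [hFt]
          _ = poincareDist ((t:ℝ):ℂ) (mob ((σ j:ℝ):ℂ) (ζ/2)) := hFdist _ _
              (by rw [Complex.norm_real, Real.norm_eq_abs, _root_.abs_of_nonneg ht0]; exact htlt) hXlt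
          _ = poincareDist (mob ((σ j:ℝ):ℂ) ((((t - σ j)/(1 - σ j * t)):ℝ):ℂ))
                (mob ((σ j:ℝ):ℂ) (ζ/2)) := by rw [hτ'c j hj]
          _ = poincareDist ((((t - σ j)/(1 - σ j * t)):ℝ):ℂ) (ζ/2) :=
              poincareDist_mob (hσjlt j) hτ'lt hhalflt
          _ ≤ myH ((t - σ j)/(1 - σ j * t)) + 1 := e2
      have hsplit := hmyH_split j hj
      rw [hL]
      linarith
    -- assembling the chain
    have hzst0 : (0:ℝ) ≤ 2*τ := by linarith
    have hzstlt : norm (((2*τ:ℝ)):ℂ) < 1 := by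
      rw [Complex.norm_real, Real.norm_eq_abs, _root_.abs_of_nonneg hzst0]; linarith
    have hzmem : (((2*τ:ℝ)):ℂ) ∈ ball (0:ℂ) 1 := mem_ball_iff_abs.mpr hzstlt
    have hgzst : ∀ j : ℕ, g j (((2*τ:ℝ)):ℂ) = F ((σ (j+1):ℝ):ℂ) := by
      intro j
      show F (mob ((σ j:ℝ):ℂ) ((((2*τ:ℝ)):ℂ)/2)) = _
      rw [show ((((2*τ:ℝ)):ℂ)/2) = ((τ:ℝ):ℂ) from by push_cast; ring, hstepc j]
    have hg0 : ∀ j : ℕ, g j 0 = F ((σ j:ℝ):ℂ) := by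
      intro j
      show F (mob ((σ j:ℝ):ℂ) (0/2)) = _
      rw [zero_div, mob_zero]
    have h2τlt : 2*τ < 1 := by linarith
    have hcost : myH (2*τ) ≤ (13/2) * (L/N) := by
      have h1 : myH (2*τ) ≤ (2*τ)/(1-2*τ) := myH_le hzst0 h2τlt
      have h2 : (2*τ)/(1-2*τ) ≤ 5*τ := by
        rw [div_le_iff₀ (by linarith)]
        nlinarith
      linarith [hτLN]
    refine ⟨N * myH (2*τ), ?_, ?_⟩
    · have h0 : 0 ≤ myH (2*τ) := myH_nonneg hzst0 h2τlt
      have h1 : (N:ℝ) * myH (2*τ) ≤ (N:ℝ) * ((13/2)*(L/N)) :=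
        mul_le_mul_of_nonneg_left hcost hNpos.le
      have h2 : (N:ℝ) * ((13/2)*(L/N)) = (13/2)*L := by
        field_simp
      rw [hL]
      linarith
    · refine ⟨N - 1, fun j ζ => φ (g j ζ), fun _ => (0:ℂ), fun _ => (((2*τ:ℝ)):ℂ),
        ?_, ?_, ?_, ?_, ?_⟩
      · intro i hi
        refine ⟨⟨?_, ?_⟩, zero_mem_ball, hzmem⟩
        · have hgdiff : DifferentiableOn ℂ (g i) (ball (0:ℂ) 1) := by
            intro ζ hζ
            have hζ' : norm ζ < 1 := mem_ball_iff_abs.mp hζ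
            have hhalflt : norm (ζ/2) < 1 := hhalf ζ hζ'
            have hXlt : norm (mob ((σ i:ℝ):ℂ) (ζ/2)) < 1 := mob_mem (hσjlt i) hhalflt
            have c1 : DifferentiableAt ℂ (fun z : ℂ => z/2) ζ := differentiableAt_id.div_const 2
            have c2 : DifferentiableAt ℂ (mob ((σ i:ℝ):ℂ)) (ζ/2) :=
              mob_differentiableAt (one_add_ne (conj_mul_abs_lt (hσjlt i) hhalflt))
            have c3 : DifferentiableAt ℂ (fun z : ℂ => u * z) (mob ((σ i:ℝ):ℂ) (ζ/2)) :=
              (differentiableAt_const u).mul differentiableAt_id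
            have c4 : DifferentiableAt ℂ (mob a) (u * mob ((σ i:ℝ):ℂ) (ζ/2)) :=
              mob_differentiableAt (one_add_ne (conj_mul_abs_lt ha' (by rw [habsu]; exact hXlt)))
            exact (c4.comp ζ (c3.comp ζ (c2.comp ζ c1))).differentiableWithinAt
          exact MDifferentiableOn.comp hφ.1 hgdiff.mdifferentiableOn
            (fun ζ hζ => mem_ball_iff_abs.mpr (hgball i ζ (mem_ball_iff_abs.mp hζ)))
        · intro ζ hζ
          exact hmem _ (mem_ball_iff_abs.mpr (hgball i ζ (mem_ball_iff_abs.mp hζ)))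
            (hkey i (by omega) ζ (mem_ball_iff_abs.mp hζ))
      · show φ (g 0 0) = φ a
        rw [hg0 0, hσ0, Complex.ofReal_zero, hF0]
      · show φ (g (N-1) (((2*τ:ℝ)):ℂ)) = φ b
        rw [hgzst, show N - 1 + 1 = N from by omega, hσN]
        rw [hFt]
      · intro i hi
        show φ (g i (((2*τ:ℝ)):ℂ)) = φ (g (i+1) 0)
        rw [hgzst i, hg0 (i+1)]
      · have hone : poincareDist 0 (((2*τ:ℝ)):ℂ) = myH (2*τ) := by
          rw [poincareDist_zero_left, Complex.norm_real, Real.norm_eq_abs, _root_.abs_of_nonneg hzst0]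
        calc (N:ℝ) * myH (2*τ)
            = ∑ _i ∈ Finset.range (N - 1 + 1), myH (2*τ) := by
              rw [Finset.sum_const, Finset.card_range, nsmul_eq_mul,
                show N - 1 + 1 = N from by omega]
          _ = ∑ _i ∈ Finset.range (N - 1 + 1), poincareDist 0 (((2*τ:ℝ)):ℂ) :=
              Finset.sum_congr rfl fun i _ => hone.symm

end KobOneDisc2

universe u v w in
theorem absolute_biLipschitz_constant_for_kobayashi_balls :
    ∃ C : ℝ, 1 ≤ C ∧
      ∀ (E : Type u) [NormedAddCommGroup E] [NormedSpace ℂ E]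
        (H : Type v) [TopologicalSpace H] (I : ModelWithCorners ℂ E H)
        (M : Type w) [TopologicalSpace M] [ChartedSpace H M] [AnalyticManifold I M],
        -- `M` is Kobayashi hyperbolic
        (∀ x y : M, x ≠ y → 0 < kobayashiDist I x y) →
        ∀ (p : M) (R : ℝ), 1 ≤ R →
          ∀ x ∈ {q : M | kobayashiDist I p q < R},
            ∀ y ∈ {q : M | kobayashiDist I p q < R},
              kobayashiDistOn I {q : M | kobayashiDist I p q < 4 * R} x y ≤
                C * kobayashiDist I x y := by
  refine ⟨7, by norm_num, ?_⟩
  intro E _ _ H _ I M _ _ _ hyp p R hR x hx y hy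
  simp only [Set.mem_setOf_eq] at hx hy
  rcases eq_or_ne x y with rfl | hxy
  · -- trivial case
    have hxΩ : x ∈ {q : M | kobayashiDist I p q < 4 * R} := by
      rw [Set.mem_setOf_eq]; linarith
    have h1 : kobayashiDistOn I {q : M | kobayashiDist I p q < 4 * R} x x ≤ 0 :=
      (chain_const hxΩ).dist_le
    have h2 : 0 ≤ kobayashiDist I x x := kobayashiDistOn_nonneg I Set.univ x x
    linarith
  · have hk := hyp x y hxy
    obtain ⟨s0, hs0, hs0R⟩ := exists_chain_lt (chains_nonempty_of_hyp hyp p x) hx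
    obtain ⟨s1, hs1, hs1R⟩ := exists_chain_lt (chains_nonempty_of_hyp hyp p y) hy
    have hkxy2R : kobayashiDist I x y ≤ s0 + s1 := (hs0.reverse.concat hs1).dist_le
    have main : ∀ ε : ℝ, 0 < ε → ε ≤ 1 →
        kobayashiDistOn I {q : M | kobayashiDist I p q < 4 * R} x y
          ≤ 7 * (kobayashiDist I x y + ε) := by
      intro ε hε hε1
      obtain ⟨S, hS, hSlt⟩ := exists_chain_lt (chains_nonempty_of_hyp hyp x y)
        (lt_add_of_pos_right (kobayashiDist I x y) hε)
      obtain ⟨n, φ, A, B, hd, hx0, hyn, hlink, rfl⟩ := hS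
      have hOne : ∀ i, ∃ s : ℝ,
          (i ≤ n → (s ≤ 7 * poincareDist (A i) (B i) ∧
            ChainIn I {q : M | kobayashiDist I p q < 4 * R} (φ i (A i)) (φ i (B i)) s)) ∧
          (¬ i ≤ n → s = 0) := by
        intro i
        by_cases hi : i ≤ n
        · obtain ⟨hdisc, hA, hB⟩ := hd i hi
          have hmem : ∀ w ∈ ball (0:ℂ) 1,
              poincareDist (A i) w + poincareDist (B i) w ≤ poincareDist (A i) (B i) + 2 →
              φ i w ∈ {q : M | kobayashiDist I p q < 4 * R} := by
            intro w hw hbound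
            have hprefix := chain_prefix hd hlink i hi
            have hsuffix := chain_suffix hd hlink i hi
            rw [hx0] at hprefix
            rw [hyn] at hsuffix
            have route1 := (hs0.concat hprefix).concat (chain_single hdisc hA hw)
            have route2 := (hs1.concat hsuffix.reverse).concat (chain_single hdisc hB hw)
            have k1 : kobayashiDist I p (φ i w)
                ≤ s0 + (∑ l ∈ Finset.range i, poincareDist (A l) (B l))
                  + poincareDist (A i) w := route1.dist_le
            have k2 : kobayashiDist I p (φ i w)
                ≤ s1 + (∑ l ∈ Finset.range (n - i),
                    poincareDist (A (i+1+l)) (B (i+1+l)))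
                  + poincareDist (B i) w := route2.dist_le
            have hsplitS := sum_split (fun l => poincareDist (A l) (B l)) hi
            rw [Set.mem_setOf_eq]
            linarith
          obtain ⟨s, hs7, hchain⟩ := one_disc_localized hdisc hA hB hmem
          exact ⟨s, fun _ => ⟨hs7, hchain⟩, fun h => absurd hi h⟩
        · exact ⟨0, fun h => absurd h hi, fun _ => rfl⟩
      choose sfun hsfun using hOne
      have hfold : ∀ m, m ≤ n → ChainIn I {q : M | kobayashiDist I p q < 4 * R} x (φ m (B m))
          (∑ i ∈ Finset.range (m+1), sfun i) := by
        intro m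
        induction m with
        | zero =>
          intro hm
          have h2 := ((hsfun 0).1 hm).2
          rw [hx0] at h2
          simpa using h2
        | succ m ih =>
          intro hm
          have h1 := ih (by omega)
          have h2 := ((hsfun (m+1)).1 hm).2
          rw [← hlink m (by omega)] at h2
          rw [Finset.sum_range_succ]
          exact h1.concat h2
      have hchainxy := hfold n le_rfl
      rw [hyn] at hchainxy
      have hbound : (∑ i ∈ Finset.range (n+1), sfun i)
          ≤ 7 * ∑ i ∈ Finset.range (n+1), poincareDist (A i) (B i) := by
        rw [Finset.mul_sum]
        refine Finset.sum_le_sum fun i hi => ?_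
        exact ((hsfun i).1 (Nat.lt_succ_iff.mp (Finset.mem_range.mp hi))).1
      have hfin := hchainxy.dist_le
      have h7 : (0:ℝ) ≤ 7 := by norm_num
      calc kobayashiDistOn I {q : M | kobayashiDist I p q < 4 * R} x y
          ≤ ∑ i ∈ Finset.range (n+1), sfun i := hfin
        _ ≤ 7 * ∑ i ∈ Finset.range (n+1), poincareDist (A i) (B i) := hbound
        _ ≤ 7 * (kobayashiDist I x y + ε) := by nlinarith [hSlt]
    rcases le_or_gt (kobayashiDistOn I {q : M | kobayashiDist I p q < 4 * R} x y)
      (7 * kobayashiDist I x y) with h | h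
    · exact h
    · exfalso
      have hδ : 0 < kobayashiDistOn I {q : M | kobayashiDist I p q < 4 * R} x y
          - 7 * kobayashiDist I x y := by linarith
      have hεpos : 0 < min 1 ((kobayashiDistOn I {q : M | kobayashiDist I p q < 4 * R} x y
          - 7 * kobayashiDist I x y)/14) := lt_min one_pos (by positivity)
      have h2 := main _ hεpos (min_le_left _ _)
      have h3 := min_le_right 1 ((kobayashiDistOn I {q : M | kobayashiDist I p q < 4 * R} x y
          - 7 * kobayashiDist I x y)/14)
      rw [mul_add] at h2
      linarith
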